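/- arXiv:1607.07827 — 2 statements merged into one kernel-verified Lean document; each statement's English description precedes it below -/
import Mathlib

section
/- Let w_q : V(F_q) → C be the function assigning to each binary cubic form v its number of roots in P^1(F_q) (so w_q(0) = q+1). Then the Fourier transform of w_q satisfies: \hat{w_q}(v) = 1 + q^{-1} if v = 0; \hat{w_q}(v) = q^{-1} if v ≠ 0 and v has a triple root in P^1(F_q); and \hat{w_q}(v) = 0 otherwise. -/
open scoped Classical
open MvPolynomial Matrix

noncomputable section

/-- The standard additive character `t ↦ exp(2πi·Tr_{F/F_p}(t)/p)` of a finite field `F`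
of characteristic `p`. -/
def psiF (p : ℕ) [Fact p.Prime] (F : Type*) [Field F] [Fintype F] [CharP F p] (t : F) : ℂ :=
  letI : Algebra (ZMod p) F := ZMod.algebra F p
  Complex.exp (2 * Real.pi * Complex.I * ((Algebra.trace (ZMod p) F t).val : ℂ) / (p : ℂ))

variable {F : Type*} [Field F] [Fintype F]

/-- The binary cubic form `a u³ + b u²v + c uv² + d v³` attached to `(a,b,c,d)`. -/
def toPoly (x : Fin 4 → F) : MvPolynomial (Fin 2) F :=
  C (x 0) * X 0 ^ 3 + C (x 1) * X 0 ^ 2 * X 1 + C (x 2) * X 0 * X 1 ^ 2 + C (x 3) * X 1 ^ 3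

/-- The number of roots of the binary cubic form `x` in `ℙ¹(F)`. -/
def numRoots (x : Fin 4 → F) : ℕ :=
  Nat.card {P : Projectivization F (Fin 2 → F) // MvPolynomial.eval P.rep (toPoly x) = 0}

/-- The bilinear form `[x,x'] = aa' + bb'/3 + cc'/3 + dd'` on binary cubic forms. -/
def bformBC (x y : Fin 4 → F) : F :=
  x 0 * y 0 + x 1 * y 1 / 3 + x 2 * y 2 / 3 + x 3 * y 3

/-- The Fourier transform on the space of binary cubic forms over `F`. -/
def FTBC (p : ℕ) [Fact p.Prime] [CharP F p] (Φ : (Fin 4 → F) → ℂ) (y : Fin 4 → F) : ℂ :=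
  ((Fintype.card F : ℂ) ^ 4)⁻¹ * ∑ x : Fin 4 → F, Φ x * psiF p F (bformBC x y)

/-!
Under the pairing `[·,·]`, evaluating a cubic form at `r ∈ F²` is pairing it with the
coefficient vector `c_r` of `(r₀u + r₁v)³` (this is where `p ≠ 3` enters). Hence
`w_q(x) = ∑_{P ∈ ℙ¹} 1[[x, c_P] = 0]`, and the Fourier transform of the indicator of the
hyperplane `c_P^⊥` is `q⁻¹` times the indicator of the line `F·c_P`, so that
`ŵ_q(v) = q⁻¹ · #{(P, u) ∈ ℙ¹ × F : v + u c_P = 0}`. For `v = 0` each of the `q + 1`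
points contributes `u = 0`. For `v ≠ 0` a solution exists exactly when `v` is a multiple of the
cube of a linear form, and it is then unique, because a cube `(r₀u + r₁v)³` determines
`[r₀ : r₁]`.
-/

section CharacterSums

open Finset

variable {M : Type*} [AddCommGroup M] [Module F M] [Fintype M] [DecidableEq M]
  {ψ : AddChar F ℂ} {B : LinearMap.BilinForm F M}

theorem sum_addChar_bilinForm_eq_ite (hψ : ψ.IsPrimitive) (hB : B.SeparatingRight) (w : M) :
    ∑ x, ψ (B x w) = if w = 0 then (Fintype.card M : ℂ) else 0 := by
  split_ifs with hw
  · simp [hw]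
  obtain ⟨x, hx⟩ : ∃ x, B x w ≠ 0 := by
    by_contra! h
    exact hw (hB w h)
  obtain ⟨u, hu⟩ : ∃ u, ψ (B x w * u) ≠ 1 := by
    by_contra! h
    exact hψ hx (AddChar.ext _ _ h)
  refine AddChar.sum_eq_zero_of_ne_one
    (ψ := ψ.compAddMonoidHom (B.flip w).toAddMonoidHom) (AddChar.ne_one_iff.2 ⟨u • x, ?_⟩)
  simpa [mul_comm] using hu

theorem sum_ite_bilinForm_eq_zero_mul_addChar (hψ : ψ.IsPrimitive) (hB : B.SeparatingRight)
    (c v : M) :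
    ∑ x, (if B x c = 0 then 1 else 0) * ψ (B x v)
      = Fintype.card M / Fintype.card F * #{u : F | v + u • c = 0} := by
  have hq : (Fintype.card F : ℂ) ≠ 0 := by simp
  have hδ (t : F) :
      (if t = 0 then 1 else 0 : ℂ) = (Fintype.card F : ℂ)⁻¹ * ∑ u, ψ (u * t) := by
    rw [AddChar.sum_mulShift t hψ]
    split_ifs <;> simp [hq]
  calc ∑ x, (if B x c = 0 then 1 else 0) * ψ (B x v)
      = (Fintype.card F : ℂ)⁻¹ * ∑ u : F, ∑ x, ψ (B x (v + u • c)) := by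
        simp_rw [hδ, map_add, map_smul, smul_eq_mul, AddChar.map_add_eq_mul, mul_sum,
          sum_mul]
        rw [sum_comm]
        simp only [mul_comm, mul_left_comm]
    _ = (Fintype.card F : ℂ)⁻¹ *
          ∑ u : F, if v + u • c = 0 then (Fintype.card M : ℂ) else 0 := by
        simp_rw [sum_addChar_bilinForm_eq_ite hψ hB]
    _ = Fintype.card M / Fintype.card F * #{u : F | v + u • c = 0} := by
        rw [sum_ite, sum_const, sum_const_zero, add_zero, nsmul_eq_mul]
        ring

end CharacterSums

section AdditiveCharacter

def psiChar (p : ℕ) [Fact p.Prime] (K : Type*) [Field K] [CharP K p] : AddChar K ℂ :=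
  letI : Algebra (ZMod p) K := ZMod.algebra K p
  ZMod.stdAddChar.compAddMonoidHom (Algebra.trace (ZMod p) K).toAddMonoidHom

variable {K : Type*} [Field K]

theorem psiChar_apply (p : ℕ) [Fact p.Prime] [Fintype K] [CharP K p] (t : K) :
    psiChar p K t = psiF p K t := by
  let : Algebra (ZMod p) K := ZMod.algebra K p
  show ZMod.stdAddChar (Algebra.trace (ZMod p) K t) = _
  rw [ZMod.stdAddChar_apply, ZMod.toCircle_apply, psiF]

theorem psiChar_isPrimitive (p : ℕ) [Fact p.Prime] [Finite K] [CharP K p] :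
    (psiChar p K).IsPrimitive := by
  let : Algebra (ZMod p) K := ZMod.algebra K p
  refine AddChar.IsPrimitive.of_ne_one (AddChar.ne_one_iff.2 ?_)
  obtain ⟨t, ht⟩ := Algebra.trace_surjective (ZMod p) K 1
  refine ⟨t, fun h ↦ one_ne_zero (ZMod.injective_stdAddChar (N := p) ?_)⟩
  rw [← ht, AddChar.map_zero_eq_one]
  exact h

end AdditiveCharacter

section BinaryCubics

open LinearAlgebra.Projectivization

variable {K : Type*} [Field K]

theorem three_ne_zero_of_ne_three {p : ℕ} [Fact p.Prime] [CharP K p] (hp : p ≠ 3) :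
    (3 : K) ≠ 0 := by
  have : ((3 : ℕ) : K) ≠ 0 := by
    rw [Ne, CharP.cast_eq_zero_iff K p]
    exact fun h ↦ hp ((Nat.prime_dvd_prime_iff_eq Fact.out Nat.prime_three).1 h)
  exact_mod_cast this

def cubeForm (r : Fin 2 → K) : Fin 4 → K :=
  ![r 0 ^ 3, 3 * r 0 ^ 2 * r 1, 3 * r 0 * r 1 ^ 2, r 1 ^ 3]

theorem cubeForm_smul (a : K) (r : Fin 2 → K) : cubeForm (a • r) = a ^ 3 • cubeForm r := by
  ext i
  fin_cases i <;>
    simp only [cubeForm, Pi.smul_apply, smul_eq_mul, Fin.isValue, Fin.zero_eta, Fin.mk_one,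
      Fin.reduceFinMk, cons_val_zero, cons_val_one, cons_val] <;>
    ring

theorem cubeForm_ne_zero {r : Fin 2 → K} (hr : r ≠ 0) : cubeForm r ≠ 0 := by
  intro h
  have h0 := congrFun h 0
  have h3 := congrFun h 3
  simp only [cubeForm, Pi.zero_apply] at h0 h3
  exact hr (funext fun i ↦ by fin_cases i <;> simp_all)

def bilinFormBC : LinearMap.BilinForm K (Fin 4 → K) :=
  LinearMap.mk₂ K bformBC
    (fun _ _ _ ↦ by simp only [bformBC, Pi.add_apply]; ring)
    (fun _ _ _ ↦ by simp only [bformBC, Pi.smul_apply, smul_eq_mul]; ring)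
    (fun _ _ _ ↦ by simp only [bformBC, Pi.add_apply]; ring)
    (fun _ _ _ ↦ by simp only [bformBC, Pi.smul_apply, smul_eq_mul]; ring)

theorem bilinFormBC_apply (x y : Fin 4 → K) : bilinFormBC x y = bformBC x y := rfl

theorem bilinFormBC_separatingRight (h3 : (3 : K) ≠ 0) :
    (bilinFormBC (K := K)).SeparatingRight := by
  intro y hy
  funext i
  have := hy (Pi.single i 1)
  fin_cases i <;> simpa [bilinFormBC_apply, bformBC, h3] using this

theorem eval_toPoly (h3 : (3 : K) ≠ 0) (x : Fin 4 → K) (r : Fin 2 → K) :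
    eval r (toPoly x) = bilinFormBC x (cubeForm r) := by
  simp only [toPoly, map_add, map_mul, map_pow, eval_C, eval_X, cubeForm, bilinFormBC_apply,
    bformBC, cons_val_zero, cons_val_one, cons_val]
  field_simp

theorem toPoly_smul_cubeForm (u : K) (r : Fin 2 → K) :
    toPoly (u • cubeForm r) = C u * (C (r 0) * X 0 + C (r 1) * X 1) ^ 3 := by
  simp only [toPoly, cubeForm, Pi.smul_apply, smul_eq_mul, C_mul, C_pow, map_ofNat,
    cons_val_zero, cons_val_one, cons_val]
  ring

theorem toPoly_injective : Function.Injective (toPoly (F := K)) := by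
  intro x y h
  have hc (k : ℕ) := congrArg (fun f ↦ (aeval ![(Polynomial.X : Polynomial K), 1] f).coeff k) h
  funext i
  fin_cases i
  · simpa [toPoly, Polynomial.coeff_X_pow, Polynomial.coeff_X] using hc 3
  · simpa [toPoly, Polynomial.coeff_X_pow, Polynomial.coeff_X] using hc 2
  · simpa [toPoly, Polynomial.coeff_X_pow, Polynomial.coeff_X] using hc 1
  · simpa [toPoly, Polynomial.coeff_X_pow, Polynomial.coeff_X] using hc 0

theorem mk_eq_mk_of_mul_eq_mul {r r' : Fin 2 → K} (hr : r ≠ 0) (hr' : r' ≠ 0)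
    (h : r 0 * r' 1 = r' 0 * r 1) : Projectivization.mk K r hr = Projectivization.mk K r' hr' := by
  rw [Projectivization.mk_eq_mk_iff']
  by_cases h0 : r' 0 = 0
  · have h1 : r' 1 ≠ 0 := fun h1 ↦ hr' (funext fun i ↦ by fin_cases i <;> simp [h0, h1])
    refine ⟨r 1 / r' 1, funext fun i ↦ ?_⟩
    have : r 0 = 0 := by simpa [h0, h1] using h
    fin_cases i <;> simp [h0, this, h1]
  · refine ⟨r 0 / r' 0, funext fun i ↦ ?_⟩
    fin_cases i
    · exact div_mul_cancel₀ _ h0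
    · show r 0 / r' 0 * r' 1 = r 1
      field_simp
      linear_combination h

theorem mul_eq_mul_of_smul_cubeForm_eq (h3 : (3 : K) ≠ 0) {u c : K} {r r' : Fin 2 → K}
    (hc : c ≠ 0) (hr' : r' ≠ 0) (h : u • cubeForm r = c • cubeForm r') :
    r 0 * r' 1 = r' 0 * r 1 := by
  have e0 := congrFun h 0
  have e1 := congrFun h 1
  have e2 := congrFun h 2
  have e3 := congrFun h 3
  simp only [cubeForm, Pi.smul_apply, smul_eq_mul, cons_val_zero, cons_val_one, cons_val]
    at e0 e1 e2 e3
  have d0 : c * r' 0 ^ 2 * (r 0 * r' 1 - r' 0 * r 1) = 0 := by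
    apply mul_left_cancel₀ h3
    linear_combination (3 * r 1) * e0 - r 0 * e1
  have d1 : c * r' 1 ^ 2 * (r 0 * r' 1 - r' 0 * r 1) = 0 := by
    apply mul_left_cancel₀ h3
    linear_combination r 1 * e2 - (3 * r 0) * e3
  rw [← sub_eq_zero]
  by_contra hD
  refine hr' (funext fun i ↦ ?_)
  fin_cases i
  · simpa [hc, hD] using d0
  · simpa [hc, hD] using d1

theorem eq_and_eq_of_smul_cubeForm_rep_eq (h3 : (3 : K) ≠ 0) {P P' : ℙ K (Fin 2 → K)}
    {u u' : K} (hu : u ≠ 0) (h : u • cubeForm P.rep = u' • cubeForm P'.rep) :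
    P = P' ∧ u = u' := by
  have hu' : u' ≠ 0 := by
    rintro rfl
    rw [zero_smul, smul_eq_zero] at h
    exact h.elim hu (cubeForm_ne_zero P.rep_nonzero)
  have hP : P = P' := by
    rw [← P.mk_rep, ← P'.mk_rep]
    exact mk_eq_mk_of_mul_eq_mul _ _ (mul_eq_mul_of_smul_cubeForm_eq h3 hu' P'.rep_nonzero h)
  subst hP
  exact ⟨rfl, smul_left_injective K (cubeForm_ne_zero P.rep_nonzero) h⟩

end BinaryCubics

section Counting

open Finset LinearAlgebra.Projectivization

variable {K : Type*} [Field K]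

instance {V : Type*} [AddCommGroup V] [Module K V] [Finite V] : Fintype (ℙ K V) :=
  Fintype.ofFinite _

theorem exists_add_smul_cubeForm_rep_eq_zero_iff {v : Fin 4 → K} (hv : v ≠ 0) :
    (∃ (P : ℙ K (Fin 2 → K)) (u : K), v + u • cubeForm P.rep = 0) ↔
      ∃ c s t : K, toPoly v = C c * (C s * X 0 + C t * X 1) ^ 3 := by
  constructor
  · rintro ⟨P, u, h⟩
    refine ⟨-u, P.rep 0, P.rep 1, ?_⟩
    rw [eq_neg_of_add_eq_zero_left h, ← neg_smul, toPoly_smul_cubeForm]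
  · rintro ⟨c, s, t, h⟩
    have hv' : v = c • cubeForm ![s, t] :=
      toPoly_injective (by rw [h, toPoly_smul_cubeForm]; simp)
    have hst : ![s, t] ≠ 0 := by
      rintro hst
      apply hv
      rw [hv', hst, ← zero_smul K 0, cubeForm_smul, zero_pow three_ne_zero, zero_smul, smul_zero]
    obtain ⟨a, ha⟩ := Projectivization.exists_smul_eq_mk_rep K ![s, t] hst
    refine ⟨Projectivization.mk K ![s, t] hst, -c / (a : K) ^ 3, ?_⟩
    rw [← ha, Units.smul_def, cubeForm_smul, smul_smul,
      div_mul_cancel₀ _ (pow_ne_zero 3 a.ne_zero), hv', neg_smul, add_neg_cancel]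

variable [Fintype K]

theorem numRoots_eq_sum (h3 : (3 : K) ≠ 0) (x : Fin 4 → K) :
    (numRoots x : ℂ) =
      ∑ P : ℙ K (Fin 2 → K), if bilinFormBC x (cubeForm P.rep) = 0 then 1 else 0 := by
  rw [numRoots, Nat.card_eq_fintype_card, Fintype.card_subtype, card_filter]
  push_cast
  simp_rw [eval_toPoly h3]

theorem sum_card_smul_cubeForm_rep_eq_zero :
    ∑ P : ℙ K (Fin 2 → K), #{u : K | u • cubeForm P.rep = 0} = Fintype.card K + 1 := by
  have h (P : ℙ K (Fin 2 → K)) : #{u : K | u • cubeForm P.rep = 0} = 1 :=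
    card_eq_one.2 ⟨0, by ext u; simp [cubeForm_ne_zero P.rep_nonzero]⟩
  simp only [h, sum_const, card_univ, smul_eq_mul, mul_one]
  rw [← Nat.card_eq_fintype_card,
    Projectivization.card_of_finrank_two K _ (Module.finrank_fin_fun K), Nat.card_eq_fintype_card]

theorem sum_card_add_smul_cubeForm_rep_eq_zero (h3 : (3 : K) ≠ 0) {v : Fin 4 → K}
    (hv : v ≠ 0) :
    ∑ P : ℙ K (Fin 2 → K), #{u : K | v + u • cubeForm P.rep = 0}
      = if ∃ c s t : K, toPoly v = C c * (C s * X 0 + C t * X 1) ^ 3 then 1 else 0 := by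
  have hsum : ∑ P : ℙ K (Fin 2 → K), #{u : K | v + u • cubeForm P.rep = 0}
      = #{Pu : ℙ K (Fin 2 → K) × K | v + Pu.2 • cubeForm Pu.1.rep = 0} := by
    simp_rw [card_filter]
    rw [Fintype.sum_prod_type]
  have hle : #{Pu : ℙ K (Fin 2 → K) × K | v + Pu.2 • cubeForm Pu.1.rep = 0} ≤ 1 := by
    refine card_le_one.2 fun a ha b hb ↦ ?_
    simp only [mem_filter, mem_univ, true_and] at ha hb
    have hu : a.2 ≠ 0 := fun hu ↦ hv (by simpa [hu] using ha)
    obtain ⟨hP, hu⟩ :=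
      eq_and_eq_of_smul_cubeForm_rep_eq h3 hu (add_left_cancel (ha.trans hb.symm))
    exact Prod.ext hP hu
  rw [hsum]
  split_ifs with h <;> rw [← exists_add_smul_cubeForm_rep_eq_zero_iff hv] at h
  · obtain ⟨P, u, hPu⟩ := h
    exact le_antisymm hle (card_pos.2 ⟨(P, u), by simpa using hPu⟩)
  · exact card_eq_zero.2 (filter_eq_empty_iff.2 fun Pu _ hPu ↦ h ⟨Pu.1, Pu.2, hPu⟩)

end Counting

open Finset LinearAlgebra.Projectivization in
theorem FTBC_numRoots (p : ℕ) [Fact p.Prime] [CharP F p] (h3 : (3 : F) ≠ 0) (v : Fin 4 → F) :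
    FTBC p (fun x ↦ (numRoots x : ℂ)) v
      = (Fintype.card F : ℂ)⁻¹ *
          ((∑ P : ℙ F (Fin 2 → F), #{u : F | v + u • cubeForm P.rep = 0} : ℕ) : ℂ) := by
  have hq : (Fintype.card F : ℂ) ≠ 0 := by simp
  simp_rw [FTBC, numRoots_eq_sum h3, sum_mul, ← psiChar_apply, ← bilinFormBC_apply]
  rw [sum_comm]
  simp_rw [sum_ite_bilinForm_eq_zero_mul_addChar (psiChar_isPrimitive p)
    (bilinFormBC_separatingRight h3), Fintype.card_fun, Fintype.card_fin, ← mul_sum]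
  push_cast
  field_simp

/-- the Fourier transform of the root-counting function of binary cubic forms. -/
theorem stmt0 (p : ℕ) [Fact p.Prime] [CharP F p] (hp : p ≠ 3) (v : Fin 4 → F) :
    FTBC p (fun x => (numRoots x : ℂ)) v =
      if v = 0 then 1 + (Fintype.card F : ℂ)⁻¹
      else if ∃ c s t : F, toPoly v = C c * (C s * X 0 + C t * X 1) ^ 3 then
        (Fintype.card F : ℂ)⁻¹
      else 0 := by
  have h3 : (3 : F) ≠ 0 := three_ne_zero_of_ne_three hp
  rw [FTBC_numRoots p h3]
  split_ifs with hv hcube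
  · simp_rw [hv, zero_add, sum_card_smul_cubeForm_rep_eq_zero]
    push_cast
    field_simp
  · rw [sum_card_add_smul_cubeForm_rep_eq_zero h3 hv, if_pos hcube]
    simp
  · rw [sum_card_add_smul_cubeForm_rep_eq_zero h3 hv, if_neg hcube]
    simp

end
end

section
/- Let V be a finite-dimensional representation of a finite group G over F_q, with an involution g ↦ g^ι of G and a non-degenerate symmetric bilinear form b : V × V → F_q satisfying b(gx, g^ι y) = b(x,y). For x, y ∈ V, let O_x and O_y denote their G-orbits and e_{O_x}, e_{O_y} the indicator functions of these orbits. Then |O_y| · \hat{e_{O_x}}(y) = |O_x| · \hat{e_{O_y}}(x), where \hatφ(z) = |V|^{-1} Σ_{w∈V} φ(w) exp(2π√(-1) · Tr_{F_q/F_p}(b(w,z))/p). -/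
open scoped Classical

noncomputable section

/-- The Fourier transform attached to a bilinear form `b` on a finite `F`-vector space `V`:
`\hatφ(y) = |V|⁻¹ ∑_x φ(x) exp(2πi·Tr(b(x,y))/p)`. -/
def FTgen {F : Type*} [Field F] [Fintype F] (p : ℕ) [Fact p.Prime] [CharP F p]
    {V : Type*} [AddCommGroup V] [Module F V] [Fintype V]
    (b : V →ₗ[F] V →ₗ[F] F) (φ : V → ℂ) (y : V) : ℂ :=
  (Fintype.card V : ℂ)⁻¹ * ∑ x : V, φ x * psiF p F (b x y)


/-- `|O_y|·ê_{O_x}(y) = |O_x|·ê_{O_y}(x)`. -/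
theorem stmt4 {F : Type*} [Field F] [Fintype F] (p : ℕ) [Fact p.Prime] [CharP F p]
    {V : Type*} [AddCommGroup V] [Module F V] [Fintype V]
    {G : Type*} [Group G] [Finite G] [DistribMulAction G V] [SMulCommClass G F V]
    (ι : G → G) (hinv : Function.Involutive ι) (hhom : ∀ g h : G, ι (g * h) = ι g * ι h)
    (b : V →ₗ[F] V →ₗ[F] F)
    (hsymm : ∀ x y : V, b x y = b y x)
    (hnd : ∀ y : V, (∀ x : V, b x y = 0) → y = 0)
    (hequiv : ∀ (g : G) (x y : V), b (g • x) (ι g • y) = b x y)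
    (x y : V) :
    (Nat.card ↥(MulAction.orbit G y) : ℂ) *
        FTgen p b (fun z => if z ∈ MulAction.orbit G x then 1 else 0) y
      = (Nat.card ↥(MulAction.orbit G x) : ℂ) *
          FTgen p b (fun z => if z ∈ MulAction.orbit G y then 1 else 0) x := by

  classical
  haveI : Fintype G := Fintype.ofFinite G
  -- `ι` is a group automorphism (involutive multiplicative map)
  have hi1 : ι 1 = 1 := by
    have h := hhom 1 1
    rw [one_mul] at h
    exact (mul_left_cancel (a := ι 1) (by rw [mul_one, ← h])).symm
  have hiinv : ∀ g : G, ι g⁻¹ = (ι g)⁻¹ := by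
    intro g
    have h := hhom g⁻¹ g
    rw [inv_mul_cancel, hi1] at h
    exact eq_inv_of_mul_eq_one_left h.symm
  set σ : G → G := fun g => (ι g)⁻¹ with hσdef
  have hσ : Function.Involutive σ := by
    intro g
    simp only [hσdef]
    rw [hiinv (ι g), inv_inv]
    exact hinv g
  -- fiberwise sum lemma
  have hB : ∀ (w : V) (f : V → ℂ), ∑ g : G, f (g • w)
      = (Fintype.card (MulAction.stabilizer G w) : ℂ) *
        ∑ z ∈ (MulAction.orbit G w).toFinset, f z := by
    intro w f
    have hfib : ∀ z : V, Fintype.card {g : G // g • w = z}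
        = if z ∈ MulAction.orbit G w then Fintype.card (MulAction.stabilizer G w) else 0 := by
      intro z
      by_cases hz : z ∈ MulAction.orbit G w
      · rw [if_pos hz]
        obtain ⟨h, rfl⟩ := MulAction.mem_orbit_iff.mp hz
        refine Fintype.card_congr ?_
        refine
          { toFun := fun g => ⟨h⁻¹ * g.1, ?_⟩
            invFun := fun s => ⟨h * s.1, ?_⟩
            left_inv := fun g => by simp
            right_inv := fun s => by simp }
        · rw [MulAction.mem_stabilizer_iff, mul_smul, g.2, inv_smul_smul]
        · rw [mul_smul, MulAction.mem_stabilizer_iff.mp s.2]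
      · rw [if_neg hz]
        rw [Fintype.card_eq_zero_iff]
        exact ⟨fun g => hz (MulAction.mem_orbit_iff.mpr ⟨g.1, g.2⟩)⟩
    calc ∑ g : G, f (g • w)
        = ∑ z : V, ∑ g : {g : G // g • w = z}, f (g.1 • w) :=
          (Fintype.sum_fiberwise (fun g : G => g • w) (fun g : G => f (g • w))).symm
      _ = ∑ z : V, (Fintype.card {g : G // g • w = z} : ℂ) * f z := by
          refine Finset.sum_congr rfl fun z _ => ?_
          calc ∑ g : {g : G // g • w = z}, f (g.1 • w)
              = ∑ _g : {g : G // g • w = z}, f z :=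
                Finset.sum_congr rfl fun g _ => by rw [g.2]
            _ = _ := by rw [Finset.sum_const, Finset.card_univ, nsmul_eq_mul]
      _ = ∑ z : V, (if z ∈ (MulAction.orbit G w).toFinset then
            (Fintype.card (MulAction.stabilizer G w) : ℂ) * f z else 0) := by
          refine Finset.sum_congr rfl fun z _ => ?_
          rw [hfib z]
          by_cases hz : z ∈ MulAction.orbit G w
          · rw [if_pos hz, if_pos (Set.mem_toFinset.mpr hz)]
          · rw [if_neg hz, if_neg (fun h => hz (Set.mem_toFinset.mp h))]
            simp
      _ = ∑ z ∈ (MulAction.orbit G w).toFinset,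
            (Fintype.card (MulAction.stabilizer G w) : ℂ) * f z := by
          rw [Finset.sum_ite_mem, Finset.univ_inter]
      _ = _ := by rw [Finset.mul_sum]
  -- the symmetry identity
  have hmid : ∑ g : G, psiF p F (b (g • x) y) = ∑ g : G, psiF p F (b (g • y) x) := by
    have h1 : ∀ g : G, b (g • x) y = b (σ g • y) x := by
      intro g
      conv_lhs => rw [show y = ι g • ((ι g)⁻¹ • y) from (smul_inv_smul _ _).symm]
      rw [hequiv, hsymm]
    calc ∑ g : G, psiF p F (b (g • x) y)
        = ∑ g : G, psiF p F (b (σ g • y) x) := by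
          exact Finset.sum_congr rfl fun g _ => by rw [h1 g]
      _ = ∑ g : G, psiF p F (b (g • y) x) :=
          Fintype.sum_bijective σ hσ.bijective _ _ (fun g => rfl)
  -- orbit-stabilizer
  have hOS : ∀ w : V, (Nat.card ↥(MulAction.orbit G w) : ℂ) *
      (Fintype.card (MulAction.stabilizer G w) : ℂ) = (Fintype.card G : ℂ) := by
    intro w
    rw [Nat.card_eq_fintype_card, ← Nat.cast_mul,
      MulAction.card_orbit_mul_card_stabilizer_eq_card_group]
  -- indicator sums
  have hind : ∀ (w u : V),
      (∑ z : V, (if z ∈ MulAction.orbit G w then (1 : ℂ) else 0) * psiF p F (b z u))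
        = ∑ z ∈ (MulAction.orbit G w).toFinset, psiF p F (b z u) := by
    intro w u
    simp_rw [ite_mul, one_mul, zero_mul, ← Set.mem_toFinset]
    rw [Finset.sum_ite_mem, Finset.univ_inter]
  have hG : (Fintype.card G : ℂ) ≠ 0 := Nat.cast_ne_zero.mpr Fintype.card_ne_zero
  have key : (Nat.card ↥(MulAction.orbit G y) : ℂ) *
      (∑ z ∈ (MulAction.orbit G x).toFinset, psiF p F (b z y))
      = (Nat.card ↥(MulAction.orbit G x) : ℂ) *
        (∑ z ∈ (MulAction.orbit G y).toFinset, psiF p F (b z x)) := by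
    apply mul_left_cancel₀ hG
    calc (Fintype.card G : ℂ) * ((Nat.card ↥(MulAction.orbit G y) : ℂ) *
          ∑ z ∈ (MulAction.orbit G x).toFinset, psiF p F (b z y))
        = (Nat.card ↥(MulAction.orbit G x) : ℂ) * (Nat.card ↥(MulAction.orbit G y) : ℂ) *
            ((Fintype.card (MulAction.stabilizer G x) : ℂ) *
              ∑ z ∈ (MulAction.orbit G x).toFinset, psiF p F (b z y)) := by
          rw [← hOS x]; ring
      _ = (Nat.card ↥(MulAction.orbit G x) : ℂ) * (Nat.card ↥(MulAction.orbit G y) : ℂ) *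
            ∑ g : G, psiF p F (b (g • x) y) := by
          rw [← hB x (fun z => psiF p F (b z y))]
      _ = (Nat.card ↥(MulAction.orbit G x) : ℂ) * (Nat.card ↥(MulAction.orbit G y) : ℂ) *
            ∑ g : G, psiF p F (b (g • y) x) := by rw [hmid]
      _ = (Nat.card ↥(MulAction.orbit G x) : ℂ) * (Nat.card ↥(MulAction.orbit G y) : ℂ) *
            ((Fintype.card (MulAction.stabilizer G y) : ℂ) *
              ∑ z ∈ (MulAction.orbit G y).toFinset, psiF p F (b z x)) := by
          rw [← hB y (fun z => psiF p F (b z x))]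
      _ = (Fintype.card G : ℂ) * ((Nat.card ↥(MulAction.orbit G x) : ℂ) *
            ∑ z ∈ (MulAction.orbit G y).toFinset, psiF p F (b z x)) := by
          rw [← hOS y]; ring
  unfold FTgen
  rw [hind x y, hind y x]
  rw [mul_comm ((Fintype.card V : ℂ)⁻¹) _, mul_comm ((Fintype.card V : ℂ)⁻¹) _,
    ← mul_assoc, ← mul_assoc, key]

end
end
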